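/- At a critical point t_crit > 0 of a, i.e. where b(t_crit) = 1/P(t_crit), any C² solution of the system da/dt = (Pa/t)(b-1/P), db/dt = (P/(2t))(1-b²) - (PQ/2)(1-a²) - Qb satisfies d²a/dt²(t_crit) = (3a(t_crit)/(2t_crit²(2t_crit²+3)))·[(4a(t_crit)² - 2)t_crit² + 3]. -/

import Mathlib

/-- Metric coefficient `P(t) = √6·√(2t²+2)/√(2t²+3)`. -/
noncomputable def Pfun (t : ℝ) : ℝ := Real.sqrt 6 * Real.sqrt (2 * t ^ 2 + 2) / Real.sqrt (2 * t ^ 2 + 3)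

/-- Metric coefficient `Q(t) = t/(t²+1)`. -/
noncomputable def Qfun (t : ℝ) : ℝ := t / (t ^ 2 + 1)

/-- `(a,b)` solves the invariant Spin(7) instanton system on the set `s`. -/
def SolvesSpin7 (a b : ℝ → ℝ) (s : Set ℝ) : Prop :=
  ∀ t ∈ s,
    HasDerivAt a (Pfun t * a t / t * (b t - 1 / Pfun t)) t ∧
    HasDerivAt b
      (Pfun t / (2 * t) * (1 - (b t) ^ 2) - Pfun t * Qfun t / 2 * (1 - (a t) ^ 2) - Qfun t * b t) t

/-! At a critical point the factor `b - 1/P` of `a'` vanishes, so only its derivative survives in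
`a''`; this derivative is read off the equation for `b'` and the logarithmic derivative
`P'/P = Q - 2t/(2t²+3)`, and `P² = 12(t²+1)/(2t²+3)` turns the result into a rational function of
`t` and `a`. -/

theorem HasDerivAt.mul_of_right_eq_zero {𝕜 : Type*} [NontriviallyNormedField 𝕜] {f g : 𝕜 → 𝕜}
    {f' g' x : 𝕜} (hf : HasDerivAt f f' x) (hg : HasDerivAt g g' x) (hgx : g x = 0) :
    HasDerivAt (fun y => f y * g y) (f x * g') x :=
  (hf.mul hg).congr_deriv (by rw [hgx, mul_zero, zero_add])

theorem Pfun_pos (t : ℝ) : 0 < Pfun t := by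
  unfold Pfun; positivity

theorem Pfun_sq (t : ℝ) : Pfun t ^ 2 = 12 * (t ^ 2 + 1) / (2 * t ^ 2 + 3) := by
  rw [Pfun, div_pow, mul_pow, Real.sq_sqrt (by positivity), Real.sq_sqrt (by positivity),
    Real.sq_sqrt (by positivity)]
  ring

theorem hasDerivAt_Pfun (t : ℝ) :
    HasDerivAt Pfun ((Qfun t - 2 * t / (2 * t ^ 2 + 3)) * Pfun t) t := by
  have hquad (c : ℝ) : HasDerivAt (fun s : ℝ => 2 * s ^ 2 + c) (4 * t) t :=
    (((hasDerivAt_pow 2 t).const_mul (2 : ℝ)).add_const c).congr_deriv (by push_cast; ring)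
  have h2 : 0 < 2 * t ^ 2 + 2 := by positivity
  have h3 : 0 < 2 * t ^ 2 + 3 := by positivity
  have hP : HasDerivAt Pfun _ t := (((hquad 2).sqrt h2.ne').const_mul (Real.sqrt 6)).div
    ((hquad 3).sqrt h3.ne') (Real.sqrt_pos.2 h3).ne'
  refine hP.congr_deriv ?_
  have hU := Real.sq_sqrt h2.le
  have hV := Real.sq_sqrt h3.le
  have hU0 := Real.sqrt_pos.2 h2
  have hV0 := Real.sqrt_pos.2 h3
  simp only [Pfun, Qfun]
  generalize √(2 * t ^ 2 + 2) = U at *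
  generalize √(2 * t ^ 2 + 3) = V at *
  field_simp
  rw [hU, hV]
  ring

theorem hasDerivAt_one_div_Pfun (t : ℝ) :
    HasDerivAt (fun s => 1 / Pfun s) (-(Qfun t - 2 * t / (2 * t ^ 2 + 3)) / Pfun t) t := by
  refine ((hasDerivAt_const t (1 : ℝ)).div (hasDerivAt_Pfun t) (Pfun_pos t).ne').congr_deriv ?_
  field_simp [(Pfun_pos t).ne']
  ring

/-- At a critical point `t_crit > 0` of `a` (i.e. where `b·P = 1`), the second derivative of `a`
equals `(3a/(2t²(2t²+3)))·[(4a² - 2)t² + 3]`. -/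
theorem spin7_second_derivative_at_critical (a b : ℝ → ℝ) (l u tcrit A : ℝ)
    (hl : 0 ≤ l) (hsol : SolvesSpin7 a b (Set.Ioo l u))
    (htc : tcrit ∈ Set.Ioo l u)
    (hcrit : b tcrit * Pfun tcrit = 1)
    (hA : HasDerivAt (fun t => Pfun t * a t / t * (b t - 1 / Pfun t)) A tcrit) :
    A = 3 * a tcrit / (2 * tcrit ^ 2 * (2 * tcrit ^ 2 + 3)) *
      ((4 * (a tcrit) ^ 2 - 2) * tcrit ^ 2 + 3) := by
  obtain ⟨ha, hb⟩ := hsol tcrit htc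
  have ht : tcrit ≠ 0 := (hl.trans_lt htc.1).ne'
  have hP := (Pfun_pos tcrit).ne'
  have hb_eq : b tcrit = 1 / Pfun tcrit := by rw [eq_div_iff hP, hcrit]
  have hf : HasDerivAt (fun t => Pfun t * a t / t) _ tcrit :=
    ((hasDerivAt_Pfun tcrit).mul ha).div (hasDerivAt_id' tcrit) ht
  have hg : HasDerivAt (fun t => b t - 1 / Pfun t) _ tcrit :=
    hb.sub (hasDerivAt_one_div_Pfun tcrit)
  rw [hA.unique (hf.mul_of_right_eq_zero hg (by rw [hb_eq, sub_self])), hb_eq, Qfun]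
  field_simp
  rw [Pfun_sq]
  field_simp
  ring
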